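/- Let B ≤ Λ(n₁, q) and C ≤ Λ(n₂, q) be alternating matrix spaces and let A ≤ Λ(n₁+n₂, q) be their disjoint direct sum. A subspace W ≤ F_q^{n₁+n₂} is totally-isotropic for A if and only if π₁(W) is totally-isotropic for B and π₂(W) is totally-isotropic for C, where π₁, π₂ are the projections onto the first n₁ and last n₂ coordinates. -/

import Mathlib

open Matrix

def IsTotallyIsotropic {F : Type} [Field F] {ι : Type} [Fintype ι]
    (𝓜 : Submodule F (Matrix ι ι F)) (U : Submodule F (ι → F)) : Prop :=
  ∀ u ∈ U, ∀ v ∈ U, ∀ M ∈ 𝓜, u ⬝ᵥ M *ᵥ v = 0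

/-- The disjoint direct sum of two alternating matrix spaces. -/
noncomputable def disjointDirectSum {F : Type} [Field F] {n₁ n₂ : ℕ}
    (𝓑 : Submodule F (Matrix (Fin n₁) (Fin n₁) F))
    (𝓒 : Submodule F (Matrix (Fin n₂) (Fin n₂) F)) :
    Submodule F (Matrix (Fin n₁ ⊕ Fin n₂) (Fin n₁ ⊕ Fin n₂) F) :=
  Submodule.span F
    ((fun B => Matrix.fromBlocks B 0 0 0) '' ↑𝓑 ∪ (fun C => Matrix.fromBlocks 0 0 0 C) '' ↑𝓒)

namespace Matrix

variable {m n α : Type*} [Fintype m] [Fintype n] [NonUnitalNonAssocSemiring α]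

theorem dotProduct_fromBlocks_mulVec (A : Matrix m m α) (B : Matrix m n α) (C : Matrix n m α)
    (D : Matrix n n α) (u v : m ⊕ n → α) :
    u ⬝ᵥ fromBlocks A B C D *ᵥ v =
      u ∘ Sum.inl ⬝ᵥ (A *ᵥ v ∘ Sum.inl + B *ᵥ v ∘ Sum.inr) +
        u ∘ Sum.inr ⬝ᵥ (C *ᵥ v ∘ Sum.inl + D *ᵥ v ∘ Sum.inr) := by
  rw [← Sum.elim_comp_inl_inr u, fromBlocks_mulVec, sumElim_dotProduct_sumElim]
  rfl

end Matrix

section IsTotallyIsotropic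

variable {F : Type} [Field F] {ι κ : Type} [Fintype κ]

theorem isTotallyIsotropic_span_iff [Fintype ι] (S : Set (Matrix ι ι F))
    (U : Submodule F (ι → F)) :
    IsTotallyIsotropic (Submodule.span F S) U ↔ ∀ u ∈ U, ∀ v ∈ U, ∀ M ∈ S, u ⬝ᵥ M *ᵥ v = 0 := by
  refine ⟨fun h u hu v hv M hM => h u hu v hv M (Submodule.subset_span hM),
    fun h u hu v hv M hM => ?_⟩
  induction hM using Submodule.span_induction with
  | mem M hM => exact h u hu v hv M hM
  | zero => simp
  | add M N _ _ hM hN => rw [add_mulVec, dotProduct_add, hM, hN, add_zero]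
  | smul c M _ hM => rw [smul_mulVec, dotProduct_smul, hM, smul_zero]

theorem isTotallyIsotropic_map_iff (𝓜 : Submodule F (Matrix κ κ F)) (U : Submodule F (ι → F))
    (f : (ι → F) →ₗ[F] κ → F) :
    IsTotallyIsotropic 𝓜 (U.map f) ↔ ∀ u ∈ U, ∀ v ∈ U, ∀ M ∈ 𝓜, f u ⬝ᵥ M *ᵥ f v = 0 := by
  simp only [IsTotallyIsotropic, Submodule.mem_map, forall_exists_index, and_imp,
    forall_apply_eq_imp_iff₂]

end IsTotallyIsotropic

theorem isotropic_direct_sum_iff_general {F : Type} [Field F] {n₁ n₂ : ℕ}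
    (𝓑 : Submodule F (Matrix (Fin n₁) (Fin n₁) F))
    (𝓒 : Submodule F (Matrix (Fin n₂) (Fin n₂) F))
    (W : Submodule F ((Fin n₁ ⊕ Fin n₂) → F)) :
    IsTotallyIsotropic (disjointDirectSum 𝓑 𝓒) W ↔
      IsTotallyIsotropic 𝓑 (W.map (LinearMap.funLeft F F Sum.inl)) ∧
        IsTotallyIsotropic 𝓒 (W.map (LinearMap.funLeft F F Sum.inr)) := by
  rw [disjointDirectSum, isTotallyIsotropic_span_iff, isTotallyIsotropic_map_iff,
    isTotallyIsotropic_map_iff]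
  simp only [Set.mem_union, or_imp, Set.forall_mem_image, forall_and,
    dotProduct_fromBlocks_mulVec, zero_mulVec, add_zero, zero_add, dotProduct_zero]
  rfl

theorem isotropic_direct_sum_iff {F : Type} [Field F] [Fintype F] {n₁ n₂ : ℕ}
    (𝓑 : Submodule F (Matrix (Fin n₁) (Fin n₁) F))
    (𝓒 : Submodule F (Matrix (Fin n₂) (Fin n₂) F))
    (haltB : ∀ B ∈ 𝓑, ∀ u : Fin n₁ → F, u ⬝ᵥ B *ᵥ u = 0)
    (haltC : ∀ C ∈ 𝓒, ∀ u : Fin n₂ → F, u ⬝ᵥ C *ᵥ u = 0)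
    (W : Submodule F ((Fin n₁ ⊕ Fin n₂) → F)) :
    IsTotallyIsotropic (disjointDirectSum 𝓑 𝓒) W ↔
      IsTotallyIsotropic 𝓑 (W.map (LinearMap.funLeft F F Sum.inl)) ∧
        IsTotallyIsotropic 𝓒 (W.map (LinearMap.funLeft F F Sum.inr)) :=
  isotropic_direct_sum_iff_general 𝓑 𝓒 W
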